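/- arXiv:2604.05297 — 2 statements merged into one kernel-verified Lean document; each statement's English description precedes it below -/
import Mathlib

section
/- In the ResQ factorization setting as above (with residual mask w_r(u) = 0 iff u = ũ, functions Q_mon : U → ℝ arbitrary and Q_r : U → ℝ with Q_r ≤ 0, and Q_tot = Q_mon + w_r·Q_r): for every ũ ∈ U one can choose Q_mon and Q_r ≤ 0 such that Q_tot ≡ Q_jt exactly AND the greedy action of Q_mon (i.e., any maximizer of Q_mon) differs from ũ, provided |U| ≥ 2. Hence zero loss is achievable with a greedy action different from ũ. -/
/-- ResQ: zero loss is achievable with a greedy action of `Qmon` different from `ũ`,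
    whenever `|U| ≥ 2`. -/
theorem stmt_4 {U : Type*} [Fintype U] [DecidableEq U]
    (hcard : 2 ≤ Fintype.card U)
    (Qjt : U → ℝ) (ut : U) :
    ∃ Qmon Qr : U → ℝ,
      (∀ u, Qr u ≤ 0) ∧
      (∀ u, Qmon u + (if u = ut then (0:ℝ) else 1) * Qr u = Qjt u) ∧
      ∃ g : U, g ≠ ut ∧ ∀ u, Qmon u ≤ Qmon g := by
  have hne : Nonempty U := Fintype.card_pos_iff.mp (by omega)
  obtain ⟨s⟩ := hne
  set M : ℝ := Finset.univ.sup' ⟨s, Finset.mem_univ s⟩ Qjt with hM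
  have hle : ∀ u : U, Qjt u ≤ M := fun u =>
    Finset.le_sup' Qjt (Finset.mem_univ u)
  set Qmon : U → ℝ := fun u => if u = ut then Qjt ut else M + 1 with hQmon
  refine ⟨Qmon, fun u => Qjt u - Qmon u, ?_, ?_, ?_⟩
  · intro u
    by_cases h : u = ut <;> simp [hQmon, h]
    · linarith [hle u]
  · intro u
    by_cases h : u = ut <;> simp [hQmon, h]
  · obtain ⟨g, hg⟩ := Fintype.exists_ne_of_one_lt_card (by omega) ut
    refine ⟨g, hg, fun u => ?_⟩
    by_cases h : u = ut <;> simp [hQmon, h, hg]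
    · linarith [hle ut]
end

section
/- Weighted least squares limit (Lemma on Q_tot* limit, simplified): let U be finite, Q_jt : U → ℝ, ũ ∈ U, and for ε ∈ (0,1] let π_ε : U → ℝ be a family of positive weights, continuous in ε, with π_ε(ũ) → 1 and π_ε(u) → 0 for u ≠ ũ as ε → 0⁺. Let f_ε : U → ℝ be any family minimizing L(f) = Σ_u π_ε(u)(f(u) − Q_jt(u))² over a class of functions that contains all constant functions. Then lim_{ε→0⁺} f_ε(ũ) = Q_jt(ũ). -/
/-!
Comparing the minimizer with the constant function `Qjt ũ`, which is in the class, gives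
`π_ε(ũ) (f_ε(ũ) - Qjt ũ)² ≤ L(f_ε) ≤ Σ_u π_ε(u) (Qjt ũ - Qjt u)²`.
The right-hand side tends to `0`, since its `ũ`-term vanishes and all other weights tend to `0`,
while `π_ε(ũ) → 1`; hence `f_ε(ũ) - Qjt ũ → 0`.
-/

open Filter Topology

theorem tendsto_zero_of_sq_tendsto_zero {α : Type*} {l : Filter α} {x : α → ℝ}
    (h : Tendsto (fun a => x a ^ 2) l (𝓝 0)) : Tendsto x l (𝓝 0) := by
  have habs := h.sqrt
  simp only [Real.sqrt_sq_eq_abs, Real.sqrt_zero] at habs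
  exact (tendsto_zero_iff_abs_tendsto_zero x).2 habs

theorem tendsto_zero_of_mul_sq_le {α : Type*} {l : Filter α} {w b x : α → ℝ}
    (hw : Tendsto w l (𝓝 1)) (hb : Tendsto b l (𝓝 0))
    (hle : ∀ᶠ a in l, w a * x a ^ 2 ≤ b a) : Tendsto x l (𝓝 0) := by
  have hw_pos : ∀ᶠ a in l, 0 < w a := hw.eventually_const_lt one_pos
  have hsq_le : ∀ᶠ a in l, x a ^ 2 ≤ b a / w a := by
    filter_upwards [hle, hw_pos] with a ha hwa
    rwa [le_div_iff₀ hwa, mul_comm]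
  have hdiv : Tendsto (fun a => b a / w a) l (𝓝 0) := by
    have := hb.div hw one_ne_zero
    rwa [zero_div] at this
  exact tendsto_zero_of_sq_tendsto_zero <| tendsto_of_tendsto_of_tendsto_of_le_of_le'
    tendsto_const_nhds hdiv (.of_forall fun a => sq_nonneg _) hsq_le

theorem tendsto_sum_mul_of_tendsto_zero_of_ne {α U : Type*} [Fintype U] {l : Filter α}
    {π : α → U → ℝ} {g : U → ℝ} {u₀ : U} (hg : g u₀ = 0)
    (hπ : ∀ u, u ≠ u₀ → Tendsto (fun a => π a u) l (𝓝 0)) :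
    Tendsto (fun a => ∑ u, π a u * g u) l (𝓝 0) := by
  rw [← Finset.sum_const_zero (s := Finset.univ) (ι := U)]
  refine tendsto_finsetSum _ fun u _ => ?_
  by_cases hu : u = u₀
  · simp only [hu, hg, mul_zero, tendsto_const_nhds]
  · simpa only [zero_mul] using (hπ u hu).mul_const (g u)

theorem stmt_7_general {U : Type*} [Fintype U]
    (Qjt : U → ℝ) (ut : U)
    (π : ℝ → U → ℝ)
    (hpos : ∀ ε ∈ Set.Ioc (0:ℝ) 1, ∀ u, 0 < π ε u)
    (hlim1 : Tendsto (fun ε => π ε ut) (𝓝[>] (0:ℝ)) (𝓝 1))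
    (hlim0 : ∀ u, u ≠ ut → Tendsto (fun ε => π ε u) (𝓝[>] (0:ℝ)) (𝓝 0))
    (F : Set (U → ℝ)) (hF : ∀ c : ℝ, (fun _ => c) ∈ F)
    (f : ℝ → U → ℝ)
    (hmin : ∀ ε ∈ Set.Ioc (0:ℝ) 1, ∀ g ∈ F,
      ∑ u, π ε u * (f ε u - Qjt u) ^ 2 ≤ ∑ u, π ε u * (g u - Qjt u) ^ 2) :
    Tendsto (fun ε => f ε ut) (𝓝[>] (0:ℝ)) (𝓝 (Qjt ut)) := by
  have hbound : ∀ᶠ ε in 𝓝[>] (0:ℝ),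
      π ε ut * (f ε ut - Qjt ut) ^ 2 ≤ ∑ u, π ε u * (Qjt ut - Qjt u) ^ 2 := by
    filter_upwards [Ioc_mem_nhdsGT one_pos] with ε hε
    calc π ε ut * (f ε ut - Qjt ut) ^ 2
        ≤ ∑ u, π ε u * (f ε u - Qjt u) ^ 2 :=
          Finset.single_le_sum (f := fun u => π ε u * (f ε u - Qjt u) ^ 2)
            (fun u _ => mul_nonneg (hpos ε hε u).le (sq_nonneg _)) (Finset.mem_univ ut)
      _ ≤ ∑ u, π ε u * (Qjt ut - Qjt u) ^ 2 := hmin ε hε _ (hF (Qjt ut))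
  have hsum : Tendsto (fun ε => ∑ u, π ε u * (Qjt ut - Qjt u) ^ 2) (𝓝[>] (0:ℝ)) (𝓝 0) :=
    tendsto_sum_mul_of_tendsto_zero_of_ne (by simp) hlim0
  have hdiff := tendsto_zero_of_mul_sq_le hlim1 hsum hbound
  simpa only [sub_add_cancel, zero_add] using hdiff.add_const (Qjt ut)

/-- Weighted least-squares limit: minimizers over a class containing all constants
    converge at `ũ` to `Qjt ũ` as the weight concentrates on `ũ`. -/
theorem stmt_7 {U : Type*} [Fintype U] [Nonempty U]
    (Qjt : U → ℝ) (ut : U)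
    (π : ℝ → U → ℝ)
    (hpos : ∀ ε ∈ Set.Ioc (0:ℝ) 1, ∀ u, 0 < π ε u)
    (hcont : ∀ u, ContinuousOn (fun ε => π ε u) (Set.Ioc (0:ℝ) 1))
    (hlim1 : Tendsto (fun ε => π ε ut) (𝓝[>] (0:ℝ)) (𝓝 1))
    (hlim0 : ∀ u, u ≠ ut → Tendsto (fun ε => π ε u) (𝓝[>] (0:ℝ)) (𝓝 0))
    (F : Set (U → ℝ)) (hF : ∀ c : ℝ, (fun _ => c) ∈ F)
    (f : ℝ → U → ℝ) (hfF : ∀ ε ∈ Set.Ioc (0:ℝ) 1, f ε ∈ F)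
    (hmin : ∀ ε ∈ Set.Ioc (0:ℝ) 1, ∀ g ∈ F,
      ∑ u, π ε u * (f ε u - Qjt u) ^ 2 ≤ ∑ u, π ε u * (g u - Qjt u) ^ 2) :
    Tendsto (fun ε => f ε ut) (𝓝[>] (0:ℝ)) (𝓝 (Qjt ut)) :=
  stmt_7_general Qjt ut π hpos hlim1 hlim0 F hF f hmin
end
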